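/- arXiv:1808.02295 — 5 statements merged into one kernel-verified Lean document; each statement's English description precedes it below -/
import Mathlib

section
/- Let K be a real-symmetric compact subset of ℂ such that ℂ \ K is not connected. Then there exists a real-symmetric function f, continuous on K and holomorphic on the interior of K, which is not a uniform limit on K of real-symmetric algebraic polynomials. -/
open Complex Set

lemma isConnected_norm_gt (R : ℝ) (hR : 0 ≤ R) : IsConnected {z : ℂ | R < ‖z‖} := by
  have h1 : IsConnected ({(0:ℂ)}ᶜ) :=
    isConnected_compl_singleton_of_one_lt_rank (by rw [rank_real_complex]; norm_num) 0
  have himg : {z : ℂ | R < ‖z‖} = (fun z : ℂ => (1 + R / ‖z‖) • z) '' {0}ᶜ := by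
    ext w
    simp only [mem_setOf_eq, mem_image, mem_compl_iff, mem_singleton_iff]
    constructor
    · intro hw
      have hw0 : w ≠ 0 := by
        intro h; rw [h, norm_zero] at hw; linarith
      have hwn : (0:ℝ) < ‖w‖ := norm_pos_iff.2 hw0
      have hw' : R < ‖w‖ := hw
      have hwa : ‖w‖ ≠ 0 := ne_of_gt hwn
      refine ⟨(1 - R/‖w‖) • w, ?_, ?_⟩
      · intro h
        rcases smul_eq_zero.1 h with h | h
        · have : R/‖w‖ < 1 := (div_lt_one hwn).2 hw
          linarith [sub_eq_zero.1 h]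
        · exact hw0 h
      · have hz : ‖(1 - R/‖w‖) • w‖ = ‖w‖ - R := by
          rw [norm_smul, Real.norm_eq_abs, abs_of_pos (by
            have : R/‖w‖ < 1 := (div_lt_one hwn).2 hw
            linarith)]
          field_simp [hwa]
        rw [smul_smul, hz]
        have hne : ‖w‖ - R ≠ 0 := ne_of_gt (by linarith)
        have : (1 + R / (‖w‖ - R)) * (1 - R / ‖w‖) = 1 := by
          show (1 + R / (‖w‖ - R)) * (1 - R / ‖w‖) = 1
          field_simp
          ring
        rw [this, one_smul]
    · rintro ⟨z, hz, rfl⟩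
      have hzn : (0:ℝ) < ‖z‖ := norm_pos_iff.2 hz
      have hza : ‖z‖ ≠ 0 := ne_of_gt hzn
      rw [norm_smul, Real.norm_eq_abs, abs_of_pos (by positivity)]
      calc R < R + ‖z‖ := by linarith
        _ = (1 + R/‖z‖) * ‖z‖ := by field_simp [hza]; ring
  rw [himg]
  exact h1.image _ (by
    refine ContinuousOn.smul (f := fun z : ℂ => 1 + R / ‖z‖) (g := fun z : ℂ => z) ?_ ?_
    · exact continuousOn_const.add (continuousOn_const.div continuous_norm.continuousOn
        (fun z hz => norm_ne_zero_iff.2 hz))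
    · exact continuousOn_id)

/-- If `K ⊆ ℂ` is a real-symmetric compact set whose complement is not connected, then
some real-symmetric function continuous on `K` and holomorphic on the interior of `K`
is not a uniform limit on `K` of real-symmetric algebraic polynomials. -/
theorem not_connected_not_approx_poly (K : Set ℂ) (hK : IsCompact K)
    (hsym : (starRingEnd ℂ) '' K = K) (hc : ¬ IsConnected Kᶜ) :
    ∃ f : ℂ → ℂ, ContinuousOn f K ∧ DifferentiableOn ℂ f (interior K) ∧
      (∀ z ∈ K, f z = starRingEnd ℂ (f (starRingEnd ℂ z))) ∧
      ¬ (∀ ε > 0, ∃ p : Polynomial ℂ,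
          (∀ z : ℂ, p.eval (starRingEnd ℂ z) = starRingEnd ℂ (p.eval z)) ∧
          ∀ z ∈ K, ‖f z - p.eval z‖ < ε) := by
  -- K is nonempty
  by_cases hKne : K.Nonempty
  swap
  · exfalso
    apply hc
    rw [not_nonempty_iff_eq_empty] at hKne
    rw [hKne, compl_empty]
    exact isConnected_univ
  -- a closed ball containing K
  obtain ⟨R₀, hR₀K⟩ := hK.isBounded.subset_closedBall 0
  set R : ℝ := max R₀ 0 with hRdef
  have hR0 : 0 ≤ R := le_max_right _ _
  have hRK : K ⊆ Metric.closedBall 0 R :=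
    hR₀K.trans (Metric.closedBall_subset_closedBall (le_max_left _ _))
  set V : Set ℂ := {z : ℂ | R < ‖z‖} with hVdef
  have hV : IsConnected V := isConnected_norm_gt R hR0
  have hVK : V ⊆ Kᶜ := by
    intro z hz hzK
    have := hRK hzK
    rw [Metric.mem_closedBall, dist_zero_right] at this
    exact absurd hz (not_lt.2 this)
  -- the complement is not preconnected
  have hKc_ne : Kᶜ.Nonempty := hV.nonempty.mono hVK
  have hpre : ¬ IsPreconnected Kᶜ := fun h => hc ⟨hKc_ne, h⟩
  unfold IsPreconnected at hpre
  push_neg at hpre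
  obtain ⟨u, v, hu, hv, hcover, hu', hv', hempty⟩ := hpre
  -- there is a point of `Kᶜ` whose connected component in `Kᶜ` is bounded
  have key : ∀ u v : Set ℂ, IsOpen u → IsOpen v → Kᶜ ⊆ u ∪ v →
      (Kᶜ ∩ (u ∩ v)) = ∅ → (Kᶜ ∩ v).Nonempty → V ⊆ u →
      ∃ z₀ ∈ Kᶜ, connectedComponentIn Kᶜ z₀ ⊆ Metric.closedBall 0 R := by
    intro u v hu hv hcover hempty hv' hVu
    obtain ⟨z₀, hz₀, hz₀v⟩ := hv'
    refine ⟨z₀, hz₀, ?_⟩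
    set U := connectedComponentIn Kᶜ z₀ with hUdef
    have hUKc : U ⊆ Kᶜ := connectedComponentIn_subset _ _
    have hz₀U : z₀ ∈ U := mem_connectedComponentIn hz₀
    have hUu : U ∩ u = ∅ := by
      by_contra hne
      rw [← Ne, ← Set.nonempty_iff_ne_empty] at hne
      have := (isPreconnected_connectedComponentIn (x := z₀) (F := Kᶜ)) u v hu hv
        (hUKc.trans hcover) hne ⟨z₀, hz₀U, hz₀v⟩
      obtain ⟨w, hwU, hwuv⟩ := this
      have : w ∈ Kᶜ ∩ (u ∩ v) := ⟨hUKc hwU, hwuv⟩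
      rw [hempty] at this
      exact this
    intro z hz
    rw [Metric.mem_closedBall, dist_zero_right]
    by_contra hzR
    have hzV : z ∈ V := lt_of_not_ge hzR
    have : z ∈ U ∩ u := ⟨hz, hVu hzV⟩
    rw [hUu] at this
    exact this
  -- apply `key` to whichever side contains V
  have hVuv : V ⊆ u ∨ V ⊆ v := by
    by_contra hVn
    push_neg at hVn
    obtain ⟨hVnu, hVnv⟩ := hVn
    rw [Set.not_subset] at hVnu hVnv
    obtain ⟨a, haV, hau⟩ := hVnu
    obtain ⟨b, hbV, hbv⟩ := hVnv
    have hbu : b ∈ u := (hcover (hVK hbV)).resolve_right hbv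
    have hav : a ∈ v := (hcover (hVK haV)).resolve_left hau
    obtain ⟨w, hwV, hwuv⟩ := hV.isPreconnected u v hu hv (hVK.trans hcover)
      ⟨b, hbV, hbu⟩ ⟨a, haV, hav⟩
    have : w ∈ Kᶜ ∩ (u ∩ v) := ⟨hVK hwV, hwuv⟩
    rw [hempty] at this
    exact this
  have hbdd : ∃ z₀ ∈ Kᶜ, connectedComponentIn Kᶜ z₀ ⊆ Metric.closedBall 0 R := by
    rcases hVuv with hVu | hVv
    · exact key u v hu hv hcover hempty hv' hVu
    · refine key v u hv hu ?_ ?_ hu' hVv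
      · rwa [union_comm]
      · rwa [inter_comm v u]
  obtain ⟨z₀, hz₀, hUb⟩ := hbdd
  set U := connectedComponentIn Kᶜ z₀ with hUdef
  set z₁ : ℂ := (starRingEnd ℂ) z₀ with hz₁def
  have hz₀K : z₀ ∉ K := hz₀
  have hz₁K : z₁ ∉ K := by
    intro h
    apply hz₀K
    have : (starRingEnd ℂ) z₁ ∈ (starRingEnd ℂ) '' K := ⟨z₁, h, rfl⟩
    rwa [hsym, hz₁def, Complex.conj_conj] at this
  set g : ℂ → ℂ := fun z => (z - z₀) * (z - z₁) with hgdef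
  have hgK : ∀ z ∈ K, g z ≠ 0 := by
    intro z hz
    exact mul_ne_zero (sub_ne_zero.2 (fun h => hz₀K (h ▸ hz)))
      (sub_ne_zero.2 (fun h => hz₁K (h ▸ hz)))
  have hgcont : Continuous g := by continuity
  set f : ℂ → ℂ := fun z => (g z)⁻¹ with hfdef
  -- frontier of U is inside K
  have hfr : frontier U ⊆ K := by
    intro x hx
    by_contra hxK
    have hxKc : x ∈ Kᶜ := hxK
    have hWo : IsOpen (connectedComponentIn Kᶜ x) :=
      (isOpen_compl_iff.2 hK.isClosed).connectedComponentIn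
    have hxm : x ∈ connectedComponentIn Kᶜ x := mem_connectedComponentIn hxKc
    obtain ⟨y, hyW, hyU⟩ := mem_closure_iff.1 hx.1 _ hWo hxm
    have h1 : connectedComponentIn Kᶜ x = connectedComponentIn Kᶜ y :=
      connectedComponentIn_eq hyW
    have h2 : U = connectedComponentIn Kᶜ y := connectedComponentIn_eq hyU
    have hxU : x ∈ U := by rw [h2, ← h1]; exact hxm
    have hUo : IsOpen U := (isOpen_compl_iff.2 hK.isClosed).connectedComponentIn
    exact hx.2 (by rwa [hUo.interior_eq])
  -- the sup of ‖g‖ on K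
  obtain ⟨x₀, hx₀K, hx₀B⟩ := hK.exists_isMaxOn hKne (hgcont.norm.continuousOn)
  set B : ℝ := ‖g x₀‖ with hBdef
  have hB0 : 0 ≤ B := norm_nonneg _
  refine ⟨f, ?_, ?_, ?_, ?_⟩
  · exact (hgcont.continuousOn).inv₀ hgK
  · intro z hz
    have hgd : Differentiable ℂ g :=
      (differentiable_id.sub_const z₀).mul (differentiable_id.sub_const z₁)
    exact ((hgd.differentiableAt).inv (hgK z (interior_subset hz))).differentiableWithinAt
  · intro z hz
    simp only [hfdef, hgdef, map_inv₀, map_mul, map_sub, Complex.conj_conj, hz₁def]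
    rw [mul_comm]
  · intro hAll
    obtain ⟨p, -, hp⟩ := hAll (1 / (B + 1)) (by positivity)
    set h : ℂ → ℂ := fun z => 1 - (z - z₀) * (z - z₁) * p.eval z with hhdef
    have hdiff : Differentiable ℂ h :=
      (differentiable_const 1).sub
        (((differentiable_id.sub_const z₀).mul (differentiable_id.sub_const z₁)).mul
          p.differentiable)
    have hbound : ∀ z ∈ frontier U, ‖h z‖ ≤ B * (1 / (B + 1)) := by
      intro z hz
      have hzK := hfr hz
      have hgz := hgK z hzK
      have heq : h z = g z * (f z - p.eval z) := by
        simp only [hhdef, hfdef, hgdef]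
        rw [mul_sub ((z - z₀) * (z - z₁)), mul_inv_cancel₀ (a := (z - z₀) * (z - z₁)) hgz]
      rw [heq, norm_mul]
      exact mul_le_mul (hx₀B hzK) (le_of_lt (hp z hzK)) (norm_nonneg _) hB0
    have hUbd : Bornology.IsBounded U := Metric.isBounded_closedBall.subset hUb
    have hz₀U : z₀ ∈ U := mem_connectedComponentIn hz₀
    have hle := Complex.norm_le_of_forall_mem_frontier_norm_le hUbd hdiff.diffContOnCl
      hbound (subset_closure hz₀U)
    have hh1 : h z₀ = 1 := by simp [hhdef]
    rw [hh1, norm_one] at hle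
    have : B * (1 / (B + 1)) < 1 := by
      rw [mul_one_div]
      exact (div_lt_one (by positivity)).2 (lt_add_one B)
    linarith
end

section
/- Let K be a real-symmetric compact subset of ℂ such that ℂ \ K is not connected. Then there exists a real-symmetric function f, continuous on K and holomorphic on the interior of K, which is not a uniform limit on K of real-symmetric Dirichlet polynomials. -/
open Complex Set

/-- A Dirichlet polynomial: a function of the form `z ↦ ∑_{k=1}^m a_k k^{-z}`. -/
def IsDirichletPolynomial (f : ℂ → ℂ) : Prop :=
  ∃ (m : ℕ) (a : ℕ → ℂ), ∀ z : ℂ, f z = ∑ k ∈ Finset.Icc 1 m, a k * (k : ℂ) ^ (-z)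

lemma aux_compl_closedBall_preconnected {R : ℝ} (hR : 0 ≤ R) :
    IsPreconnected ((Metric.closedBall (0:ℂ) R)ᶜ) := by
  have hs : IsPreconnected ((Set.Ioi R) ×ˢ (Metric.sphere (0:ℂ) 1)) := by
    refine (isPreconnected_Ioi).prod ?_
    exact ((isPathConnected_sphere (by rw [rank_real_complex]; norm_num) (0:ℂ)
      zero_le_one).isConnected).isPreconnected
  have himage : (fun p : ℝ × ℂ => p.1 • p.2) '' ((Set.Ioi R) ×ˢ (Metric.sphere (0:ℂ) 1))
      = (Metric.closedBall (0:ℂ) R)ᶜ := by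
    ext z
    constructor
    · rintro ⟨⟨r, u⟩, ⟨hr, hu⟩, rfl⟩
      simp only [mem_Ioi] at hr
      simp only [Metric.mem_sphere, dist_zero_right] at hu
      simp only [mem_compl_iff, Metric.mem_closedBall, dist_zero_right, not_le,
        norm_smul, hu, mul_one, Real.norm_eq_abs]
      rw [abs_of_pos (lt_of_le_of_lt hR hr)]
      exact hr
    · intro hz
      simp only [mem_compl_iff, Metric.mem_closedBall, dist_zero_right, not_le] at hz
      have hz0 : ‖z‖ ≠ 0 := ne_of_gt (lt_of_le_of_lt hR hz)
      refine ⟨⟨‖z‖, ‖z‖⁻¹ • z⟩, ⟨hz, ?_⟩, ?_⟩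
      · rw [Metric.mem_sphere, dist_zero_right, norm_smul, norm_inv, norm_norm,
          inv_mul_cancel₀ hz0]
      · show ‖z‖ • ‖z‖⁻¹ • z = z
        rw [smul_smul, mul_inv_cancel₀ hz0, one_smul]
  rw [← himage]
  exact hs.image _ (continuous_fst.smul continuous_snd).continuousOn

/-- Dirichlet polynomials are entire. -/
lemma aux_dirichlet_differentiable {D : ℂ → ℂ} (hD : IsDirichletPolynomial D) :
    Differentiable ℂ D := by
  obtain ⟨m, a, h⟩ := hD
  have : D = fun z => ∑ k ∈ Finset.Icc 1 m, a k * (k : ℂ) ^ (-z) := funext h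
  rw [this]
  apply Differentiable.fun_sum
  intro k hk
  have hk0 : (k : ℂ) ≠ 0 := by
    have h1 : 1 ≤ k := (Finset.mem_Icc.1 hk).1
    exact Nat.cast_ne_zero.2 (by omega)
  exact (differentiable_id.neg.const_cpow (Or.inl hk0)).const_mul _

/-- Key step: if `B` is a nonempty bounded open set whose frontier is inside `K`, the
conclusion holds. -/
lemma aux_main {K : Set ℂ} (hK : IsCompact K) (hsym : (starRingEnd ℂ) '' K = K)
    {B : Set ℂ} (hBopen : IsOpen B) (hBne : B.Nonempty) (hBbd : Bornology.IsBounded B)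
    (hBK : B ⊆ Kᶜ) (hfr : frontier B ⊆ K) :
    ∃ f : ℂ → ℂ, ContinuousOn f K ∧ DifferentiableOn ℂ f (interior K) ∧
      (∀ z ∈ K, f z = starRingEnd ℂ (f (starRingEnd ℂ z))) ∧
      ¬ (∀ ε > 0, ∃ D : ℂ → ℂ, IsDirichletPolynomial D ∧
          (∀ z : ℂ, D (starRingEnd ℂ z) = starRingEnd ℂ (D z)) ∧
          ∀ z ∈ K, ‖f z - D z‖ < ε) := by
  obtain ⟨c, hc⟩ := hBne
  have hcK : c ∉ K := hBK hc
  have hcK' : (starRingEnd ℂ) c ∉ K := by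
    intro h
    apply hcK
    have : (starRingEnd ℂ) ((starRingEnd ℂ) c) ∈ (starRingEnd ℂ) '' K := ⟨_, h, rfl⟩
    simpa [hsym] using this
  set p : ℂ → ℂ := fun z => (z - c) * (z - (starRingEnd ℂ) c) with hp
  have hpne : ∀ z ∈ K, p z ≠ 0 := by
    intro z hz
    apply mul_ne_zero <;> rw [sub_ne_zero] <;> rintro rfl <;> [exact hcK hz; exact hcK' hz]
  have hpdiff : Differentiable ℂ p :=
    (differentiable_id.sub_const c).mul (differentiable_id.sub_const _)
  refine ⟨fun z => (p z)⁻¹, ?_, ?_, ?_, ?_⟩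
  · exact ContinuousOn.inv₀ hpdiff.continuous.continuousOn hpne
  · exact DifferentiableOn.inv (hpdiff.differentiableOn) fun z hz =>
      hpne z (interior_subset hz)
  · intro z _
    simp only [hp, map_inv₀, map_mul, map_sub, Complex.conj_conj]
    rw [mul_comm]
  · intro h
    -- bound for p on closure B
    have hclB : IsCompact (closure B) := hBbd.isCompact_closure
    obtain ⟨M, hM⟩ := hclB.exists_bound_of_continuousOn hpdiff.continuous.continuousOn
    set M' : ℝ := max M 1 with hM'
    have hM'pos : 0 < M' := lt_of_lt_of_le one_pos (le_max_right _ _)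
    obtain ⟨D, hDdir, -, hDapprox⟩ := h (1 / (2 * M')) (by positivity)
    have hDdiff : Differentiable ℂ D := aux_dirichlet_differentiable hDdir
    set g : ℂ → ℂ := fun z => 1 - p z * D z with hg
    have hgdiff : Differentiable ℂ g :=
      (differentiable_const 1).sub (hpdiff.mul hDdiff)
    have hbound : ∀ z ∈ frontier B, ‖g z‖ ≤ 1 / 2 := by
      intro z hzf
      have hzK : z ∈ K := hfr hzf
      have hzcl : z ∈ closure B := frontier_subset_closure hzf
      have h1 : g z = p z * ((p z)⁻¹ - D z) := by
        show 1 - p z * D z = p z * ((p z)⁻¹ - D z)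
        rw [mul_sub, mul_inv_cancel₀ (hpne z hzK)]
      rw [h1, norm_mul]
      have h2 : ‖p z‖ ≤ M' := le_trans (hM z hzcl) (le_max_left _ _)
      have h3 : ‖(p z)⁻¹ - D z‖ ≤ 1 / (2 * M') := le_of_lt (hDapprox z hzK)
      calc ‖p z‖ * ‖(p z)⁻¹ - D z‖ ≤ M' * (1 / (2 * M')) :=
            mul_le_mul h2 h3 (norm_nonneg _) (le_of_lt hM'pos)
        _ = 1 / 2 := by field_simp
    have hmax : ‖g c‖ ≤ 1 / 2 :=
      Complex.norm_le_of_forall_mem_frontier_norm_le hBbd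
        hgdiff.diffContOnCl hbound (subset_closure hc)
    have : g c = 1 := by simp [hg, hp]
    rw [this] at hmax
    norm_num at hmax

/-- If `K ⊆ ℂ` is a real-symmetric compact set whose complement is not connected, then
some real-symmetric function continuous on `K` and holomorphic on the interior of `K`
is not a uniform limit on `K` of real-symmetric Dirichlet polynomials. -/
theorem not_connected_not_approx_dirichlet (K : Set ℂ) (hK : IsCompact K)
    (hsym : (starRingEnd ℂ) '' K = K) (hc : ¬ IsConnected Kᶜ) :
    ∃ f : ℂ → ℂ, ContinuousOn f K ∧ DifferentiableOn ℂ f (interior K) ∧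
      (∀ z ∈ K, f z = starRingEnd ℂ (f (starRingEnd ℂ z))) ∧
      ¬ (∀ ε > 0, ∃ D : ℂ → ℂ, IsDirichletPolynomial D ∧
          (∀ z : ℂ, D (starRingEnd ℂ z) = starRingEnd ℂ (D z)) ∧
          ∀ z ∈ K, ‖f z - D z‖ < ε) := by
  obtain ⟨R, hR0, hKR⟩ := hK.isBounded.subset_closedBall_lt 0 0
  set E : Set ℂ := (Metric.closedBall (0:ℂ) R)ᶜ with hE
  have hEK : E ⊆ Kᶜ := compl_subset_compl.2 hKR
  have hEne : E.Nonempty := by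
    refine ⟨((R + 1 : ℝ) : ℂ), ?_⟩
    simp only [hE, mem_compl_iff, Metric.mem_closedBall, dist_zero_right, not_le,
      Complex.norm_real, Real.norm_eq_abs]
    rw [abs_of_pos (by linarith)]
    linarith
  have hEpre : IsPreconnected E := aux_compl_closedBall_preconnected hR0.le
  have hKcne : Kᶜ.Nonempty := hEne.mono hEK
  have hnpre : ¬ IsPreconnected Kᶜ := fun h => hc ⟨hKcne, h⟩
  rw [IsPreconnected] at hnpre
  push_neg at hnpre
  obtain ⟨U, V, hU, hV, hUV, hKU, hKV, hdisj⟩ := hnpre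
  have hdisj' : Kᶜ ∩ (U ∩ V) = ∅ := hdisj
  -- E is contained in U or in V
  have hEcases : E ∩ U = ∅ ∨ E ∩ V = ∅ := by
    by_contra hcon
    push_neg at hcon
    have h1 : (E ∩ U).Nonempty := hcon.1
    have h2 : (E ∩ V).Nonempty := hcon.2
    obtain ⟨x, hx⟩ := hEpre U V hU hV (hEK.trans hUV) h1 h2
    have : x ∈ Kᶜ ∩ (U ∩ V) := ⟨hEK hx.1, hx.2⟩
    rw [hdisj'] at this
    exact this
  -- helper to apply aux_main given the "bounded side" W and "unbounded side" W'
  have key : ∀ W W' : Set ℂ, IsOpen W → IsOpen W' → Kᶜ ⊆ W' ∪ W →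
      (Kᶜ ∩ W).Nonempty → Kᶜ ∩ (W' ∩ W) = ∅ → E ∩ W = ∅ →
      ∃ f : ℂ → ℂ, ContinuousOn f K ∧ DifferentiableOn ℂ f (interior K) ∧
      (∀ z ∈ K, f z = starRingEnd ℂ (f (starRingEnd ℂ z))) ∧
      ¬ (∀ ε > 0, ∃ D : ℂ → ℂ, IsDirichletPolynomial D ∧
          (∀ z : ℂ, D (starRingEnd ℂ z) = starRingEnd ℂ (D z)) ∧
          ∀ z ∈ K, ‖f z - D z‖ < ε) := by
    intro W W' hWo hW'o hsub hne hdis hEW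
    set B : Set ℂ := Kᶜ ∩ W with hB
    have hBopen : IsOpen B := (isOpen_compl_iff.2 hK.isClosed).inter hWo
    have hBK : B ⊆ Kᶜ := inter_subset_left
    have hBbd : Bornology.IsBounded B := by
      apply Bornology.IsBounded.subset (Metric.isBounded_closedBall (x := (0:ℂ)) (r := R))
      intro z hz
      by_contra hzE
      have : z ∈ E ∩ W := ⟨hzE, hz.2⟩
      rw [hEW] at this
      exact this
    have hfr : frontier B ⊆ K := by
      intro z hz
      by_contra hzK
      have hzc : z ∈ Kᶜ := hzK
      have hzcl : z ∈ closure B := hz.1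
      rcases hsub hzc with hzW' | hzW
      · -- W' ∩ Kᶜ open, disjoint from B, contains z : contradicts z ∈ closure B
        have hop : IsOpen (Kᶜ ∩ W') := (isOpen_compl_iff.2 hK.isClosed).inter hW'o
        obtain ⟨y, hy, hyB⟩ := mem_closure_iff.1 hzcl _ hop ⟨hzc, hzW'⟩
        have : y ∈ Kᶜ ∩ (W' ∩ W) := ⟨hy.1, hy.2, hyB.2⟩
        rw [hdis] at this
        exact this
      · -- z ∈ B, contradicting z ∈ frontier B (B open)
        have : z ∈ B := ⟨hzc, hzW⟩
        exact hz.2 (interior_maximal subset_rfl hBopen this)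
    exact aux_main hK hsym hBopen hne hBbd hBK hfr
  rcases hEcases with hEU | hEV
  · exact key U V hU hV (by rwa [union_comm]) hKU
      (by rw [← hdisj']; ext x; constructor
          · rintro ⟨h1, h2, h3⟩; exact ⟨h1, h3, h2⟩
          · rintro ⟨h1, h2, h3⟩; exact ⟨h1, h3, h2⟩) hEU
  · exact key V U hV hU hUV hKV hdisj' hEV
end

section
/- Let U ⊆ ℂ be a bounded open set and let a ∈ U. Then for every complex polynomial p, the supremum over z in the boundary of U ∪ U* of |p(z)(z − a)(z − conj(a)) − 1| is at least 1. Consequently, if U is a bounded connected component of the complement of a compact set K (so that ∂(U ∪ U*) ⊆ K when K is real-symmetric), the function z ↦ (z − a)^{−1}(z − conj(a))^{−1} cannot be approximated on K by polynomials to within arbitrary accuracy. -/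
open Complex Set

/-- For a bounded open set `U ⊆ ℂ` and `a ∈ U`: for every polynomial `p`, the supremum
over the boundary of `U ∪ U*` of `|p(z)(z-a)(z-conj a) - 1|` is at least `1`.
Consequently, if `U` is a bounded connected component of the complement of a
real-symmetric compact set `K`, then `z ↦ ((z-a)(z-conj a))⁻¹` cannot be approximated on
`K` by polynomials to within arbitrary accuracy. -/
theorem sup_boundary_ge_one (U : Set ℂ) (hU : IsOpen U) (hUb : Bornology.IsBounded U)
    (a : ℂ) (ha : a ∈ U) :
    (∀ p : Polynomial ℂ,
      1 ≤ sSup ((fun z => ‖p.eval z * (z - a) * (z - starRingEnd ℂ a) - 1‖) ''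
        frontier (U ∪ (starRingEnd ℂ) '' U))) ∧
    (∀ K : Set ℂ, IsCompact K → (starRingEnd ℂ) '' K = K →
      (∃ z ∈ Kᶜ, U = connectedComponentIn Kᶜ z) →
      ¬ (∀ ε > 0, ∃ p : Polynomial ℂ,
          ∀ z ∈ K, ‖((z - a) * (z - starRingEnd ℂ a))⁻¹ - p.eval z‖ < ε)) := by
  set V : Set ℂ := U ∪ (starRingEnd ℂ) '' U with hVdef
  have hconjim : ∀ s : Set ℂ, (starRingEnd ℂ) '' s = Complex.conjCLE.toHomeomorph '' s := by
    intro s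
    refine image_congr fun z _ => ?_
    simp [Complex.conjCLE_apply]
  have hVo : IsOpen V := by
    refine hU.union ?_
    rw [hconjim]
    exact Complex.conjCLE.toHomeomorph.isOpenMap _ hU
  have hVb : Bornology.IsBounded V := by
    refine hUb.union ?_
    rw [hconjim]
    exact (Complex.conjCLE.lipschitz.isBounded_image hUb)
  have haV : a ∈ V := Or.inl ha
  have hcptF : IsCompact (frontier V) :=
    Metric.isCompact_of_isClosed_isBounded isClosed_frontier
      (hVb.closure.subset frontier_subset_closure)
  have part1 : ∀ p : Polynomial ℂ,
      1 ≤ sSup ((fun z => ‖p.eval z * (z - a) * (z - starRingEnd ℂ a) - 1‖) '' frontier V) := by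
    intro p
    set f : ℂ → ℂ := fun z => p.eval z * (z - a) * (z - starRingEnd ℂ a) - 1 with hf
    have hdf : Differentiable ℂ f := by
      apply Differentiable.sub _ (differentiable_const 1)
      exact ((p.differentiable.mul (differentiable_id.sub (differentiable_const a))).mul
        (differentiable_id.sub (differentiable_const _)))
    have hbdd : BddAbove ((fun z => ‖f z‖) '' frontier V) :=
      (hcptF.image (by fun_prop)).bddAbove
    have key : ‖f a‖ ≤ sSup ((fun z => ‖f z‖) '' frontier V) :=
      Complex.norm_le_of_forall_mem_frontier_norm_le hVb hdf.diffContOnCl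
        (fun w hw => le_csSup hbdd ⟨w, hw, rfl⟩) (subset_closure haV)
    have hfa : ‖f a‖ = 1 := by simp [hf]
    linarith [key, hfa.symm.le]
  refine ⟨part1, ?_⟩
  intro K hK hKsym hcomp happ
  obtain ⟨z0, hz0, hUeq⟩ := hcomp
  have hUK : U ⊆ Kᶜ := hUeq ▸ connectedComponentIn_subset _ _
  have haK : a ∉ K := hUK ha
  have haK' : starRingEnd ℂ a ∉ K := by
    intro h
    apply haK
    have : starRingEnd ℂ (starRingEnd ℂ a) ∈ (starRingEnd ℂ) '' K := mem_image_of_mem _ h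
    rwa [hKsym, Complex.conj_conj] at this
  -- frontier U ⊆ K
  have hfrU : frontier U ⊆ K := by
    intro w hw
    by_contra hwK
    have hpre : IsPreconnected (closure U ∩ Kᶜ) := by
      refine IsPreconnected.subset_closure ?_ (subset_inter subset_closure hUK) inter_subset_left
      exact hUeq ▸ isPreconnected_connectedComponentIn
    have hz0U : z0 ∈ U := hUeq ▸ mem_connectedComponentIn hz0
    have hsub : closure U ∩ Kᶜ ⊆ U := by
      have := hpre.subset_connectedComponentIn (x := z0)
        ⟨subset_closure hz0U, hUK hz0U⟩ inter_subset_right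
      rwa [← hUeq] at this
    have hwU : w ∉ U := by
      rw [hU.frontier_eq] at hw; exact hw.2
    exact hwU (hsub ⟨hw.1, hwK⟩)
  have hfrU' : frontier ((starRingEnd ℂ) '' U) ⊆ K := by
    rw [hconjim, ← Complex.conjCLE.toHomeomorph.image_frontier]
    rintro _ ⟨w, hw, rfl⟩
    have : starRingEnd ℂ w ∈ (starRingEnd ℂ) '' K := mem_image_of_mem _ (hfrU hw)
    rw [hKsym] at this
    simpa [Complex.conjCLE_apply] using this
  have hfrV : frontier V ⊆ K :=
    (frontier_union_subset _ _).trans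
      (union_subset (inter_subset_left.trans hfrU) (inter_subset_right.trans hfrU'))
  -- bound
  obtain ⟨M, hM⟩ := hK.exists_bound_of_continuousOn
    (f := fun z => (z - a) * (z - starRingEnd ℂ a)) (by fun_prop)
  set M' : ℝ := max M 0 with hM'
  have hM'pos : 0 < M' + 1 := by positivity
  obtain ⟨p, hp⟩ := happ (1 / (M' + 1)) (by positivity)
  have hlt : ∀ z ∈ K, ‖p.eval z * (z - a) * (z - starRingEnd ℂ a) - 1‖ < 1 := by
    intro z hz
    have hz1 : z - a ≠ 0 := sub_ne_zero.2 (by rintro rfl; exact haK hz)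
    have hz2 : z - starRingEnd ℂ a ≠ 0 := sub_ne_zero.2 (by rintro rfl; exact haK' hz)
    have heq : p.eval z * (z - a) * (z - starRingEnd ℂ a) - 1 =
        ((z - a) * (z - starRingEnd ℂ a)) *
          (p.eval z - ((z - a) * (z - starRingEnd ℂ a))⁻¹) := by
      field_simp
    rw [heq, norm_mul]
    have h1 : ‖(z - a) * (z - starRingEnd ℂ a)‖ ≤ M' + 1 :=
      (hM z hz).trans (by simp [hM']; linarith [le_max_left M 0])
    have h2 : ‖p.eval z - ((z - a) * (z - starRingEnd ℂ a))⁻¹‖ < 1 / (M' + 1) := by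
      rw [norm_sub_rev]; exact hp z hz
    calc ‖(z - a) * (z - starRingEnd ℂ a)‖ * ‖p.eval z - ((z - a) * (z - starRingEnd ℂ a))⁻¹‖
        ≤ (M' + 1) * ‖p.eval z - ((z - a) * (z - starRingEnd ℂ a))⁻¹‖ :=
          mul_le_mul_of_nonneg_right h1 (norm_nonneg _)
      _ < (M' + 1) * (1 / (M' + 1)) := by
          exact mul_lt_mul_of_pos_left h2 hM'pos
      _ = 1 := by field_simp
  have h1 := part1 p
  have hne : (frontier V).Nonempty := by
    by_contra h
    rw [not_nonempty_iff_eq_empty] at h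
    rw [h] at h1
    simp [Real.sSup_empty] at h1
    linarith
  obtain ⟨w, hwF, hweq⟩ := hcptF.exists_sSup_image_eq hne
    (f := fun z => ‖p.eval z * (z - a) * (z - starRingEnd ℂ a) - 1‖) (by fun_prop)
  rw [hweq] at h1
  exact absurd h1 (not_le.2 (hlt w (hfrV hwF)))
end

section
/- Let X be a topological vector space (over ℝ or ℂ), let Y be a dense linear subspace of X, and let L_1, …, L_n be continuous linear functionals on X. Then for each x ∈ X and each neighbourhood U of x there exists y ∈ Y with y ∈ U and L_i(y) = L_i(x) for i = 1, …, n. -/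
open Filter

/-- Deutsch's simultaneous approximation and interpolation theorem: if `Y` is a dense
linear subspace of a topological vector space `X` over `ℝ` or `ℂ`, and `L_1, …, L_n` are
continuous linear functionals on `X`, then for each `x ∈ X` and each neighbourhood `U`
of `x` there is `y ∈ Y` with `y ∈ U` and `L_i y = L_i x` for all `i`. -/
theorem deutsch_simultaneous_interpolation
    (𝕜 : Type*) [RCLike 𝕜]
    (X : Type*) [AddCommGroup X] [Module 𝕜 X] [TopologicalSpace X]
    [IsTopologicalAddGroup X] [ContinuousSMul 𝕜 X]
    (Y : Submodule 𝕜 X) (hY : Dense (Y : Set X))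
    (n : ℕ) (L : Fin n → X →L[𝕜] 𝕜)
    (x : X) (U : Set X) (hU : U ∈ nhds x) :
    ∃ y ∈ Y, y ∈ U ∧ ∀ i, L i y = L i x := by
  set T : X →L[𝕜] (Fin n → 𝕜) := ContinuousLinearMap.pi L with hT
  set V : Submodule 𝕜 (Fin n → 𝕜) :=
    LinearMap.range ((T : X →ₗ[𝕜] (Fin n → 𝕜)).comp Y.subtype) with hV
  -- every value of T lies in V
  have hmem : ∀ z : X, T z ∈ V := by
    intro z
    by_contra hz
    obtain ⟨φ, hφ1, hφ2⟩ := V.exists_dual_map_eq_bot_of_notMem hz inferInstance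
    have hφV : ∀ v ∈ V, φ v = 0 := by
      intro v hv
      have : φ v ∈ V.map φ := Submodule.mem_map_of_mem hv
      rwa [hφ2, Submodule.mem_bot] at this
    have hcont : Continuous fun w : X => φ (T w) :=
      (LinearMap.continuous_of_finiteDimensional φ).comp T.continuous
    have hzero : ∀ w : X, φ (T w) = 0 := by
      have h0 : Set.EqOn (fun w : X => φ (T w)) (fun _ => 0) (Y : Set X) := by
        intro w hw
        exact hφV _ ⟨⟨w, hw⟩, rfl⟩
      have := Continuous.ext_on hY hcont continuous_const h0
      intro w; exact congrFun this w
    exact hφ1 (hzero z)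
  -- a linear right inverse landing in Y
  obtain ⟨g, hg⟩ := LinearMap.exists_rightInverse_of_surjective
    ((T : X →ₗ[𝕜] (Fin n → 𝕜)).comp Y.subtype).rangeRestrict
    (LinearMap.range_rangeRestrict _)
  set S : V →ₗ[𝕜] X := Y.subtype.comp g with hS
  have hTS : ∀ v : V, T (S v) = (v : Fin n → 𝕜) := by
    intro v
    have := congrFun (congrArg (fun h => h.toFun) hg) v
    simpa [S] using congrArg Subtype.val this
  have hScont : Continuous S := S.continuous_of_finiteDimensional
  set F : X → X := fun z => z - S ⟨T z - T x, V.sub_mem (hmem z) (hmem x)⟩ with hF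
  have hFcont : Continuous F := by
    apply continuous_id.sub
    exact hScont.comp (Continuous.subtype_mk (T.continuous.sub continuous_const) _)
  have hFx : F x = x := by
    have : (⟨T x - T x, V.sub_mem (hmem x) (hmem x)⟩ : V) = 0 := by
      ext; simp
    simp only [F]
    rw [show (⟨T x - T x, V.sub_mem (hmem x) (hmem x)⟩ : V) = 0 from this, map_zero, sub_zero]
  have hpre : F ⁻¹' U ∈ nhds x := by
    have := hFcont.continuousAt (x := x)
    rw [ContinuousAt, hFx] at this
    exact this hU
  obtain ⟨z, hz1, hz2⟩ := mem_closure_iff_nhds.mp (hY x) _ hpre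
  refine ⟨F z, ?_, hz1, ?_⟩
  · exact Y.sub_mem hz2 (g _).2
  · intro i
    have hTF : T (F z) = T x := by
      simp only [F, map_sub, hTS]
      abel
    have := congrFun hTF i
    simpa [T, ContinuousLinearMap.pi_apply] using this
end

section
/- Let Q_1, …, Q_N be pairwise disjoint closed axis-parallel rectangles in ℂ (sets of the form {z : a ≤ Re z ≤ b, c ≤ Im z ≤ d} with a < b and c < d). Then the complement in ℂ of the union Q_1 ∪ ⋯ ∪ Q_N is connected. -/
open Complex Set

private lemma seg_coord' {p q z : ℂ} (h : z ∈ segment ℝ p q) :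
    ∃ u v : ℝ, 0 ≤ u ∧ 0 ≤ v ∧ u + v = 1 ∧
      z.re = u * p.re + v * q.re ∧ z.im = u * p.im + v * q.im := by
  obtain ⟨u, v, hu, hv, huv, rfl⟩ := h
  exact ⟨u, v, hu, hv, huv, by simp [Complex.add_re, Complex.smul_re],
    by simp [Complex.add_im, Complex.smul_im]⟩

private lemma joinedIn_of_segment' {p q : ℂ} {s : Set ℂ} (h : segment ℝ p q ⊆ s) :
    JoinedIn s p q :=
  (((convex_segment p q).isPathConnected ⟨p, left_mem_segment ℝ p q⟩).joinedIn p
      (left_mem_segment ℝ p q) q (right_mem_segment ℝ p q)).mono h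

private lemma between_conv {u v x y t : ℝ} (hu : 0 ≤ u) (hv : 0 ≤ v) (huv : u + v = 1)
    (ht : t = u * x + v * y) (hxy : x ≤ y) : x ≤ t ∧ t ≤ y := by
  have e1 : t - x = v * (y - x) := by linear_combination ht + x * huv
  have e2 : y - t = u * (y - x) := by linear_combination -ht - y * huv
  constructor
  · linarith [e1, mul_nonneg hv (sub_nonneg.2 hxy)]
  · linarith [e2, mul_nonneg hu (sub_nonneg.2 hxy)]

private lemma exists_pos_min {α : Type*} [Fintype α] (f : α → ℝ) (hf : ∀ x, 0 < f x) :
    ∃ ε : ℝ, 0 < ε ∧ ε ≤ 1 ∧ ∀ x, ε ≤ f x := by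
  cases isEmpty_or_nonempty α with
  | inl h => exact ⟨1, one_pos, le_refl 1, fun x => (IsEmpty.false x).elim⟩
  | inr h =>
    obtain ⟨x₀, -, hx₀⟩ := Finset.exists_min_image Finset.univ f
      ⟨Classical.arbitrary α, Finset.mem_univ _⟩
    exact ⟨min (f x₀) 1, lt_min (hf x₀) one_pos, min_le_right _ _,
      fun x => le_trans (min_le_left _ _) (hx₀ x (Finset.mem_univ x))⟩

private lemma exists_ub' {α : Type*} [Fintype α] (f : α → ℝ) : ∃ M : ℝ, ∀ x, f x < M := by
  cases isEmpty_or_nonempty α with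
  | inl h => exact ⟨1, fun x => (IsEmpty.false x).elim⟩
  | inr h =>
    obtain ⟨x₀, -, hx₀⟩ := Finset.exists_max_image Finset.univ f
      ⟨Classical.arbitrary α, Finset.mem_univ _⟩
    exact ⟨f x₀ + 1, fun x => lt_of_le_of_lt (hx₀ x (Finset.mem_univ x)) (lt_add_one _)⟩

/-- The complement of a finite union of pairwise disjoint closed axis-parallel rectangles
in `ℂ` is connected. -/
theorem compl_union_rectangles_connected (N : ℕ) (Q : Fin N → Set ℂ)
    (hrect : ∀ i, ∃ a b c d : ℝ, a < b ∧ c < d ∧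
      Q i = {z : ℂ | a ≤ z.re ∧ z.re ≤ b ∧ c ≤ z.im ∧ z.im ≤ d})
    (hdisj : ∀ i j, i ≠ j → Disjoint (Q i) (Q j)) :
    IsConnected (⋃ i, Q i)ᶜ := by
  classical
  choose a b c d hab hcd hQ using hrect
  have hmem : ∀ (i : Fin N) (z : ℂ),
      z ∈ Q i ↔ a i ≤ z.re ∧ z.re ≤ b i ∧ c i ≤ z.im ∧ z.im ≤ d i := by
    intro i z; rw [hQ i]; exact Iff.rfl
  set K := (⋃ i, Q i) with hK
  have hKmem : ∀ z : ℂ, z ∉ K ↔ ∀ i, z ∉ Q i := by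
    intro z; simp [hK]
  -- coordinatewise separation of distinct rectangles
  have hsep : ∀ i j, i ≠ j → b i < a j ∨ b j < a i ∨ d i < c j ∨ d j < c i := by
    intro i j hij
    by_contra hcon
    push_neg at hcon
    obtain ⟨h1, h2, h3, h4⟩ := hcon
    have hw : (⟨max (a i) (a j), max (c i) (c j)⟩ : ℂ) ∈ Q i ∩ Q j := by
      constructor <;> rw [hmem] <;>
        exact ⟨by simp, by rw [max_le_iff]; constructor <;> linarith [hab i, hab j],
          by simp, by rw [max_le_iff]; constructor <;> linarith [hcd i, hcd j]⟩
    exact (hdisj i j hij).ne_of_mem hw.1 hw.2 rfl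
  -- a uniform positive gap ε
  obtain ⟨ε, hε0, hε1, hεf⟩ := exists_pos_min
    (fun p : Fin N × Fin N => if p.1 = p.2 then (1:ℝ) else
      max (max (a p.2 - b p.1) (a p.1 - b p.2)) (max (c p.2 - d p.1) (c p.1 - d p.2)))
    (by
      intro p
      split_ifs with h
      · norm_num
      · simp only [lt_max_iff]
        rcases hsep p.1 p.2 h with h' | h' | h' | h'
        · exact Or.inl (Or.inl (by linarith))
        · exact Or.inl (Or.inr (by linarith))
        · exact Or.inr (Or.inl (by linarith))
        · exact Or.inr (Or.inr (by linarith)))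
  have hεg : ∀ i j, i ≠ j →
      ε ≤ max (max (a j - b i) (a i - b j)) (max (c j - d i) (c i - d j)) := by
    intro i j hij
    have := hεf (i, j)
    simpa [hij] using this
  -- separation: a point δ-close to rectangle i is not in rectangle j
  have hsepδ : ∀ i j, i ≠ j → ∀ p : ℂ, ∀ δ : ℝ, δ < ε →
      a i - δ ≤ p.re → p.re ≤ b i + δ → c i - δ ≤ p.im → p.im ≤ d i + δ → p ∉ Q j := by
    intro i j hij p δ hδε h1 h2 h3 h4 hp
    rw [hmem] at hp
    obtain ⟨hp1, hp2, hp3, hp4⟩ := hp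
    have hg := lt_of_lt_of_le hδε (hεg i j hij)
    rw [lt_max_iff, lt_max_iff, lt_max_iff] at hg
    rcases hg with (h | h) | (h | h) <;> linarith
  -- the high level m
  obtain ⟨m, hdm⟩ := exists_ub' d
  have hhigh : ∀ p : ℂ, m ≤ p.im → p ∉ K := by
    intro p hp
    rw [hKmem]
    intro i hi
    rw [hmem] at hi
    have := hdm i
    linarith [hi.2.2.2]
  -- straight vertical escape when no rectangle blocks upward
  have hstraight : ∀ z : ℂ, z ∉ K → (∀ i, a i ≤ z.re → z.re ≤ b i → c i ≤ z.im) →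
      ∃ w : ℂ, w.im = m ∧ JoinedIn Kᶜ z w := by
    intro z hz hnb
    refine ⟨⟨z.re, m⟩, rfl, joinedIn_of_segment' ?_⟩
    intro p hp
    obtain ⟨u, v, hu, hv, huv, hre, him⟩ := seg_coord' hp
    simp only at hre him
    have hpre : p.re = z.re := by linear_combination hre + z.re * huv
    rw [mem_compl_iff, hKmem]
    intro k hk
    rw [hmem] at hk
    obtain ⟨hk1, hk2, hk3, hk4⟩ := hk
    rw [hpre] at hk1 hk2
    have hck := hnb k hk1 hk2
    rcases le_or_gt z.im m with h | h
    · have e : p.im - z.im = v * (m - z.im) := by linear_combination him + z.im * huv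
      have hzp : z.im ≤ p.im := by
        have := mul_nonneg hv (sub_nonneg.2 h)
        linarith
      exact hz (hK ▸ Set.mem_iUnion.2 ⟨k, (hmem k z).2 ⟨hk1, hk2, hck, by linarith⟩⟩)
    · have e : p.im - m = u * (z.im - m) := by linear_combination him + m * huv
      have hmp : m ≤ p.im := by
        have := mul_nonneg hu (by linarith : (0:ℝ) ≤ z.im - m)
        linarith
      have := hdm k
      linarith
  -- main escape lemma, by induction on the number of rectangle tops above z
  have main : ∀ n : ℕ, ∀ z : ℂ, z ∉ K →
      (Finset.univ.filter fun i => z.im < d i).card ≤ n →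
      ∃ w : ℂ, w.im = m ∧ JoinedIn Kᶜ z w := by
    intro n
    induction n with
    | zero =>
      intro z hz hcard
      apply hstraight z hz
      intro i h1 h2
      by_contra h3
      push_neg at h3
      have hi : i ∈ Finset.univ.filter fun i => z.im < d i :=
        Finset.mem_filter.2 ⟨Finset.mem_univ _, lt_trans h3 (hcd i)⟩
      have := Finset.card_pos.2 ⟨i, hi⟩
      omega
    | succ n ih =>
      intro z hz hcard
      by_cases hB : ∀ i, a i ≤ z.re → z.re ≤ b i → c i ≤ z.im
      · exact hstraight z hz hB
      · push_neg at hB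
        have hBne : (Finset.univ.filter
            (fun i => a i ≤ z.re ∧ z.re ≤ b i ∧ z.im < c i)).Nonempty := by
          obtain ⟨i, h1, h2, h3⟩ := hB
          exact ⟨i, Finset.mem_filter.2 ⟨Finset.mem_univ _, h1, h2, h3⟩⟩
        obtain ⟨j, hjB, hjmin⟩ := Finset.exists_min_image _ c hBne
        rw [Finset.mem_filter] at hjB
        obtain ⟨-, hja, hjb, hjc⟩ := hjB
        have hjmin' : ∀ i, a i ≤ z.re → z.re ≤ b i → z.im < c i → c j ≤ c i := by
          intro i h1 h2 h3
          exact hjmin i (Finset.mem_filter.2 ⟨Finset.mem_univ _, h1, h2, h3⟩)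
        set δ : ℝ := min (c j - z.im) (ε / 2) with hδdef
        have hδ0 : 0 < δ := lt_min (by linarith) (by linarith)
        have hδε : δ < ε := lt_of_le_of_lt (min_le_right _ _) (by linarith)
        have hδc : δ ≤ c j - z.im := min_le_left _ _
        -- segment 1 : from z up to (z.re, c j - δ)
        have hS1 : segment ℝ z ⟨z.re, c j - δ⟩ ⊆ Kᶜ := by
          intro p hp
          obtain ⟨u, v, hu, hv, huv, hre, him⟩ := seg_coord' hp
          simp only at hre him
          have hpre : p.re = z.re := by linear_combination hre + z.re * huv
          obtain ⟨hp1, hp2⟩ := between_conv hu hv huv him (by linarith)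
          rw [mem_compl_iff, hKmem]
          intro k hk
          rw [hmem] at hk
          obtain ⟨hk1, hk2, hk3, hk4⟩ := hk
          rw [hpre] at hk1 hk2
          rcases le_or_gt (c k) z.im with h | h
          · exact hz (hK ▸ Set.mem_iUnion.2 ⟨k, (hmem k z).2 ⟨hk1, hk2, h, by linarith⟩⟩)
          · have := hjmin' k hk1 hk2 h
            linarith
        -- segment 2 : horizontal below rectangle j
        have hS2 : segment ℝ (⟨z.re, c j - δ⟩ : ℂ) ⟨b j + δ, c j - δ⟩ ⊆ Kᶜ := by
          intro p hp
          obtain ⟨u, v, hu, hv, huv, hre, him⟩ := seg_coord' hp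
          simp only at hre him
          have hpim : p.im = c j - δ := by linear_combination him + (c j - δ) * huv
          obtain ⟨hp1, hp2⟩ := between_conv hu hv huv hre
            (show z.re ≤ b j + δ by linarith)
          rw [mem_compl_iff, hKmem]
          intro k hk
          by_cases hkj : k = j
          · subst hkj
            rw [hmem] at hk
            linarith [hk.2.2.1]
          · exact hsepδ j k (fun h => hkj h.symm) p δ hδε (by linarith) (by linarith)
              (by linarith) (by linarith [hcd j]) hk
        -- segment 3 : vertical right of rectangle j
        have hS3 : segment ℝ (⟨b j + δ, c j - δ⟩ : ℂ) ⟨b j + δ, d j + δ⟩ ⊆ Kᶜ := by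
          intro p hp
          obtain ⟨u, v, hu, hv, huv, hre, him⟩ := seg_coord' hp
          simp only at hre him
          have hpre : p.re = b j + δ := by linear_combination hre + (b j + δ) * huv
          obtain ⟨hp1, hp2⟩ := between_conv hu hv huv him
            (show c j - δ ≤ d j + δ by linarith [hcd j])
          rw [mem_compl_iff, hKmem]
          intro k hk
          by_cases hkj : k = j
          · subst hkj
            rw [hmem] at hk
            linarith [hk.2.1]
          · exact hsepδ j k (fun h => hkj h.symm) p δ hδε (by linarith [hab j]) (by linarith)
              (by linarith) (by linarith) hk
        -- segment 4 : horizontal above rectangle j, back to re = z.re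
        have hS4 : segment ℝ (⟨b j + δ, d j + δ⟩ : ℂ) ⟨z.re, d j + δ⟩ ⊆ Kᶜ := by
          intro p hp
          obtain ⟨u, v, hu, hv, huv, hre, him⟩ := seg_coord' hp
          simp only at hre him
          have hpim : p.im = d j + δ := by linear_combination him + (d j + δ) * huv
          obtain ⟨hp1, hp2⟩ := between_conv hv hu (by linarith)
            (show p.re = v * z.re + u * (b j + δ) by rw [hre]; ring)
            (show z.re ≤ b j + δ by linarith)
          rw [mem_compl_iff, hKmem]
          intro k hk
          by_cases hkj : k = j
          · subst hkj
            rw [hmem] at hk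
            linarith [hk.2.2.2]
          · exact hsepδ j k (fun h => hkj h.symm) p δ hδε (by linarith) (by linarith)
              (by linarith [hcd j]) (by linarith) hk
        -- the new starting point
        have hw2 : (⟨z.re, d j + δ⟩ : ℂ) ∉ K := hS4 (right_mem_segment ℝ _ _)
        have hcard2 : (Finset.univ.filter fun i => (⟨z.re, d j + δ⟩ : ℂ).im < d i).card ≤ n := by
          have hjz : j ∈ Finset.univ.filter fun i => z.im < d i :=
            Finset.mem_filter.2 ⟨Finset.mem_univ _, lt_trans hjc (hcd j)⟩
          have hsub : (Finset.univ.filter fun i => (⟨z.re, d j + δ⟩ : ℂ).im < d i) ⊆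
              (Finset.univ.filter fun i => z.im < d i).erase j := by
            intro i hi
            rw [Finset.mem_filter] at hi
            have hi2 : d j + δ < d i := hi.2
            refine Finset.mem_erase.2 ⟨?_, Finset.mem_filter.2 ⟨Finset.mem_univ _, ?_⟩⟩
            · intro h; rw [h] at hi2; linarith
            · linarith [hcd j]
          have h1 := Finset.card_le_card hsub
          rw [Finset.card_erase_of_mem hjz] at h1
          omega
        obtain ⟨w, hwim, hwj⟩ := ih _ hw2 hcard2
        exact ⟨w, hwim, ((((joinedIn_of_segment' hS1).trans (joinedIn_of_segment' hS2)).trans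
          (joinedIn_of_segment' hS3)).trans (joinedIn_of_segment' hS4)).trans hwj⟩
  -- assemble path-connectedness
  have hpc : IsPathConnected Kᶜ := by
    rw [isPathConnected_iff]
    constructor
    · exact ⟨⟨0, m⟩, hhigh _ le_rfl⟩
    · intro x hx y hy
      obtain ⟨wx, hwxm, hjx⟩ := main _ x hx le_rfl
      obtain ⟨wy, hwym, hjy⟩ := main _ y hy le_rfl
      have hmid : JoinedIn Kᶜ wx wy := by
        apply joinedIn_of_segment'
        intro p hp
        obtain ⟨u, v, hu, hv, huv, hre, him⟩ := seg_coord' hp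
        rw [hwxm, hwym] at him
        have hpm : p.im = m := by linear_combination him + m * huv
        exact hhigh p hpm.ge
      exact hjx.trans (hmid.trans hjy.symm)
  exact hpc.isConnected
end
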